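/- The vacuum object V_K of M(X) is transparent: for every object W of M(X), the braiding satisfies R_{W,V_K} ∘ R_{V_K,W} = id. -/

import Mathlib

/-- A crossed module: groups `X₁`, `X₂`, a right action of `X₁` on `X₂` by group
automorphisms (written `act m g` for `m^g`), and a boundary homomorphism
`δ : X₂ →* X₁` satisfying equivariance and the Peiffer identity. -/
structure CrossedModule (X₁ X₂ : Type) [Group X₁] [Group X₂] where
  act : X₂ → X₁ → X₂
  act_one : ∀ m : X₂, act m 1 = m
  act_mul : ∀ (m : X₂) (g h : X₁), act m (g * h) = act (act m g) h
  act_hom : ∀ (m n : X₂) (g : X₁), act (m * n) g = act m g * act n g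
  δ : X₂ →* X₁
  equivariance : ∀ (m : X₂) (g : X₁), δ (act m g) = g⁻¹ * δ m * g
  peiffer : ∀ m n : X₂, act m (δ n) = n⁻¹ * m * n

section Representations
open TensorProduct

variable {F : Type} [Field F] {X₁ X₂ : Type} [Group X₁] [Group X₂] [Fintype X₁] [Fintype X₂] [DecidableEq X₂]

/-- A representation of the crossed module `X` on the `F`-vector space `V`:
an `X₂`-grading, encoded by the family of projections `P m` onto the graded
components, together with an `X₁`-action `Q` such that `P(m)Q(g) = Q(g)P(m^g)`.
These are the objects of the category `M(X)`. -/
structure XRep (F : Type) [Field F] {X₁ X₂ : Type} [Group X₁] [Group X₂] [Fintype X₂] [DecidableEq X₂]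
    (X : CrossedModule X₁ X₂)
    (V : Type) [AddCommGroup V] [Module F V] where
  P : X₂ → (V →ₗ[F] V)
  Q : X₁ → (V →ₗ[F] V)
  P_orth : ∀ m n : X₂, (P m) ∘ₗ (P n) = if m = n then P m else 0
  P_total : (∑ m : X₂, P m) = LinearMap.id
  Q_one : Q 1 = LinearMap.id
  Q_mul : ∀ g h : X₁, Q (g * h) = Q g ∘ₗ Q h
  PQ_compat : ∀ (m : X₂) (g : X₁), (P m) ∘ₗ (Q g) = (Q g) ∘ₗ (P (X.act m g))

variable {X : CrossedModule X₁ X₂}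
variable {U V W U' V' W' : Type}
  [AddCommGroup U] [Module F U] [AddCommGroup V] [Module F V] [AddCommGroup W] [Module F W]
  [AddCommGroup U'] [Module F U'] [AddCommGroup V'] [Module F V'] [AddCommGroup W'] [Module F W']

/-- The grading of the tensor product: `(V ⊗ W)_m = ⊕_{nl = m} V_n ⊗ W_l`. -/
noncomputable def tensorP (A : XRep F X V) (B : XRep F X W) (m : X₂) :
    (V ⊗[F] W) →ₗ[F] (V ⊗[F] W) :=
  ∑ n : X₂, TensorProduct.map (A.P n) (B.P (n⁻¹ * m))

/-- The diagonal `X₁`-action on the tensor product. -/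
noncomputable def tensorQ (A : XRep F X V) (B : XRep F X W) (g : X₁) :
    (V ⊗[F] W) →ₗ[F] (V ⊗[F] W) :=
  TensorProduct.map (A.Q g) (B.Q g)

/-- The braiding `R_{V,W}(v ⊗ w) = ∑_{m ∈ X₂} Q_W(∂m) w ⊗ P_V(m) v`, written in terms
of the grading data `PA` on `V` and the action data `QB` on `W`. -/
noncomputable def braidAux (X : CrossedModule X₁ X₂)
    (PA : X₂ → (V →ₗ[F] V)) (QB : X₁ → (W →ₗ[F] W)) :
    (V ⊗[F] W) →ₗ[F] (W ⊗[F] V) :=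
  ∑ m : X₂, (TensorProduct.map (QB (X.δ m)) (PA m)) ∘ₗ
    (TensorProduct.comm F V W).toLinearMap

/-- The braiding `R_{V,W}` between two crossed-module representations. -/
noncomputable def braid (A : XRep F X V) (B : XRep F X W) :
    (V ⊗[F] W) →ₗ[F] (W ⊗[F] V) :=
  braidAux X A.P B.Q

/-- Morphisms in `M(X)`: linear maps compatible with the grading and the action. -/
def IsXRepHom (A : XRep F X V) (B : XRep F X W) (f : V →ₗ[F] W) : Prop :=
  (∀ m : X₂, f ∘ₗ A.P m = B.P m ∘ₗ f) ∧ (∀ g : X₁, f ∘ₗ A.Q g = B.Q g ∘ₗ f)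

end Representations

section Vacuum

variable (F : Type) [Field F] {X₁ X₂ : Type} [Group X₁] [Group X₂]
  [Fintype X₁] [Fintype X₂] [DecidableEq X₂]
  (X : CrossedModule X₁ X₂) [X.δ.range.Normal]

/-- The underlying vector space `k[ker ∂] ⊗ k(coker ∂)` of the vacuum object,
realized as the space of `F`-valued functions on `(ker ∂) × (coker ∂)`;
the basis vector `x ⊗ δ_{Iy}` corresponds to the indicator function of `(x, Iy)`. -/
abbrev VacuumCarrier : Type := (X.δ.ker × (X₁ ⧸ X.δ.range)) → F

/-- The grading projections of the vacuum object,
`P(m)(x ⊗ δ_{Iy}) = δ(m^y, x) (x ⊗ δ_{Iy})`, defined via a choice of coset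
representative. -/
noncomputable def vacuumP (m : X₂) : VacuumCarrier F X →ₗ[F] VacuumCarrier F X where
  toFun f := fun p => if X.act m (Quotient.out p.2) = (p.1 : X₂) then f p else 0
  map_add' f g := by funext p; by_cases h : X.act m (Quotient.out p.2) = (p.1 : X₂) <;> simp [h]
  map_smul' c f := by funext p; by_cases h : X.act m (Quotient.out p.2) = (p.1 : X₂) <;> simp [h]

/-- The `X₁`-action of the vacuum object, `Q(g)(x ⊗ δ_{Iy}) = x ⊗ δ_{Igy}`. -/
def vacuumQ (g : X₁) : VacuumCarrier F X →ₗ[F] VacuumCarrier F X where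
  toFun f := fun p => f (p.1, (QuotientGroup.mk g)⁻¹ * p.2)
  map_add' f g := by funext p; simp
  map_smul' c f := by funext p; simp

end Vacuum

/-!
On the vacuum object the grading is concentrated in `ker ∂` and the action of `X₁` factors
through `coker ∂`. Hence in `R_{V_K,W}` only terms with `∂m = 1` survive, where `Q_W(∂m)` is
trivial, and in `R_{W,V_K}` every `Q_{V_K}(∂m)` is trivial. Both braidings are therefore the
plain flip of tensor factors, and so their composite is the identity.
-/

open TensorProduct

namespace CrossedModule

variable {X₁ X₂ : Type} [Group X₁] [Group X₂] (X : CrossedModule X₁ X₂)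

theorem act_eq_iff (m n : X₂) (g : X₁) : X.act m g = n ↔ m = X.act n g⁻¹ := by
  constructor
  · rintro rfl
    rw [← X.act_mul, mul_inv_cancel, X.act_one]
  · rintro rfl
    rw [← X.act_mul, inv_mul_cancel, X.act_one]

theorem δ_act_eq_one_iff (m : X₂) (g : X₁) : X.δ (X.act m g) = 1 ↔ X.δ m = 1 := by
  rw [X.equivariance, mul_assoc, inv_mul_eq_one, eq_comm, mul_eq_right]

end CrossedModule

section Braiding

variable {F : Type} [Field F] {X₁ X₂ : Type} [Group X₁] [Group X₂] [Fintype X₂]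
  {V W : Type} [AddCommGroup V] [Module F V] [AddCommGroup W] [Module F W]

theorem braidAux_eq_comm (X : CrossedModule X₁ X₂) {PA : X₂ → V →ₗ[F] V}
    {QB : X₁ → W →ₗ[F] W} (hP : ∑ m, PA m = LinearMap.id)
    (hQ : ∀ m, PA m = 0 ∨ QB (X.δ m) = LinearMap.id) :
    braidAux X PA QB = (TensorProduct.comm F V W).toLinearMap := by
  refine ext' fun v w => ?_
  simp only [braidAux, LinearMap.sum_apply, LinearMap.comp_apply, LinearEquiv.coe_coe,
    comm_tmul, map_tmul]
  calc ∑ m, QB (X.δ m) w ⊗ₜ[F] PA m v = ∑ m, w ⊗ₜ[F] PA m v := by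
        refine Finset.sum_congr rfl fun m _ => ?_
        rcases hQ m with h | h <;> simp [h]
    _ = w ⊗ₜ[F] v := by
        rw [← tmul_sum, ← LinearMap.sum_apply, hP, LinearMap.id_apply]

end Braiding

section Vacuum

variable (F : Type) [Field F] {X₁ X₂ : Type} [Group X₁] [Group X₂] (X : CrossedModule X₁ X₂)

theorem vacuumP_eq_zero [DecidableEq X₂] {m : X₂} (hm : X.δ m ≠ 1) : vacuumP F X m = 0 := by
  ext f p
  refine if_neg fun h => hm ?_
  rw [← X.δ_act_eq_one_iff m (Quotient.out p.2), h]
  exact p.1.2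

theorem sum_vacuumP [Fintype X₂] [DecidableEq X₂] : ∑ m, vacuumP F X m = LinearMap.id := by
  ext f p
  simp only [LinearMap.sum_apply, Finset.sum_apply, vacuumP, LinearMap.coe_mk, AddHom.coe_mk,
    X.act_eq_iff, Finset.sum_ite_eq', Finset.mem_univ, if_true, LinearMap.id_apply]

theorem vacuumQ_δ [X.δ.range.Normal] (n : X₂) : vacuumQ F X (X.δ n) = LinearMap.id := by
  have h : (QuotientGroup.mk (X.δ n) : X₁ ⧸ X.δ.range) = 1 :=
    (QuotientGroup.eq_one_iff _).2 ⟨n, rfl⟩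
  ext f p
  simp [vacuumQ, h]

end Vacuum

theorem vacuum_transparent_general {F : Type} [Field F]
    {X₁ X₂ : Type} [Group X₁] [Group X₂] [Fintype X₂] [DecidableEq X₂]
    (X : CrossedModule X₁ X₂) [X.δ.range.Normal]
    {W : Type} [AddCommGroup W] [Module F W]
    (B : XRep F X W) :
    braidAux X B.P (vacuumQ F X) ∘ₗ braidAux X (vacuumP F X) B.Q =
      LinearMap.id := by
  have hV : braidAux X (vacuumP F X) B.Q = (TensorProduct.comm F _ W).toLinearMap := by
    refine braidAux_eq_comm X (sum_vacuumP F X) fun m => ?_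
    by_cases hm : X.δ m = 1
    · exact .inr (by rw [hm, B.Q_one])
    · exact .inl (vacuumP_eq_zero F X hm)
  have hW : braidAux X B.P (vacuumQ F X) = (TensorProduct.comm F W _).toLinearMap :=
    braidAux_eq_comm X B.P_total fun n => .inr (vacuumQ_δ F X n)
  rw [hV, hW, comm_comp_comm]

/-- The vacuum object `V_K` of `M(X)` is transparent: for every object `W` of
`M(X)`, the braiding satisfies `R_{W,V_K} ∘ R_{V_K,W} = id`. -/
theorem vacuum_transparent {F : Type} [Field F] [IsAlgClosed F] [CharZero F]
    {X₁ X₂ : Type} [Group X₁] [Group X₂] [Fintype X₁] [Fintype X₂] [DecidableEq X₂]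
    (X : CrossedModule X₁ X₂) [X.δ.range.Normal]
    {W : Type} [AddCommGroup W] [Module F W] [FiniteDimensional F W]
    (B : XRep F X W) :
    braidAux X B.P (vacuumQ F X) ∘ₗ braidAux X (vacuumP F X) B.Q =
      LinearMap.id :=
  vacuum_transparent_general X B
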